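/- arXiv:1507.07034 — 4 statements merged into one kernel-verified Lean document; each statement's English description precedes it below -/
import Mathlib

section
/- For all real u with 0 ≤ u < min(√2, π/2), u² ≤ sin(u)·tan(u) ≤ u² + u⁴/(2 - u²). -/
open Real

theorem sin_mul_tan_bounds (u : ℝ) (hu : 0 ≤ u) (hu2 : u < Real.sqrt 2)
    (huπ : u < Real.pi / 2) :
    u ^ 2 ≤ Real.sin u * Real.tan u ∧
    Real.sin u * Real.tan u ≤ u ^ 2 + u ^ 4 / (2 - u ^ 2) := by
  have hsqrt2 : Real.sqrt 2 ^ 2 = 2 := Real.sq_sqrt (by norm_num)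
  have hsq : u ^ 2 < 2 := by nlinarith [Real.sqrt_nonneg 2]
  have hc : 0 < Real.cos u :=
    Real.cos_pos_of_mem_Ioo ⟨by linarith [Real.pi_pos], huπ⟩
  have htan : Real.tan u = Real.sin u / Real.cos u := Real.tan_eq_sin_div_cos u
  have hsin_le : Real.sin u ≤ u := Real.sin_le hu
  have hsin_nonneg : 0 ≤ Real.sin u := Real.sin_nonneg_of_nonneg_of_le_pi hu
    (by nlinarith [Real.pi_gt_three])
  have hcos_lb : 1 - u ^ 2 / 2 ≤ Real.cos u := Real.one_sub_sq_div_two_le_cos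
  have hpyth : Real.sin u ^ 2 = 1 - Real.cos u ^ 2 := by
    have := Real.sin_sq_add_cos_sq u; linarith
  -- upper bound for cos u
  have hcos_ub : Real.cos u ≤ 1 - u ^ 2 / 2 + u ^ 4 / 16 := by
    rcases eq_or_lt_of_le hu with h0 | h0
    · simp [← h0]
    · have hs2 : Real.sqrt 2 < 2 := by nlinarith [Real.sqrt_nonneg 2]
      have h1 : u / 2 ≤ 1 := by linarith
      have h2 : u / 2 - (u / 2) ^ 3 / 4 < Real.sin (u / 2) :=
        by have := Real.sin_gt_sub_cube (x := u / 2) (by linarith); nlinarith [pow_pos (show (0:ℝ) < u / 2 by linarith) 3]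
      have h3 : Real.sin (u / 2) ^ 2 = 1 / 2 - Real.cos u / 2 := by
        have := Real.sin_sq_eq_half_sub (u / 2)
        rw [show 2 * (u / 2) = u by ring] at this
        linarith
      have h4 : 0 ≤ u / 2 - (u / 2) ^ 3 / 4 := by nlinarith
      nlinarith [sq_nonneg (u/2 - (u/2)^3/4)]
  constructor
  · rw [htan, ← mul_div_assoc, ← sq, le_div_iff₀ hc, hpyth]
    nlinarith [sq_nonneg u, sq_nonneg (u^2), hc.le, sq_nonneg (u^3)]
  · rw [htan, ← mul_div_assoc, ← sq]
    have h2u : 0 < 2 - u ^ 2 := by linarith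
    have key : Real.sin u ^ 2 / Real.cos u ≤ 2 * u ^ 2 / (2 - u ^ 2) := by
      rw [div_le_div_iff₀ hc h2u]
      nlinarith [mul_le_mul hsin_le hsin_le hsin_nonneg hu]
    have : u ^ 2 + u ^ 4 / (2 - u ^ 2) = 2 * u ^ 2 / (2 - u ^ 2) := by
      field_simp; ring
    linarith [key]
end

section
/- For all real u with 0 ≤ u < min(√2, π/2), u³ ≤ sin(u)·tan(u)² ≤ u³ + u⁵(4 - u²)/(2 - u²)². -/
open Real

private lemma aux_sin_ge (x : ℝ) (hx : 0 ≤ x) : x - x ^ 3 / 6 ≤ Real.sin x := by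
  have key : ∀ y : ℝ, HasDerivAt (fun t => Real.sin t - t + t ^ 3 / 6)
      (Real.cos y - 1 + 3 * y ^ 2 / 6) y := by
    intro y
    have h1 := (Real.hasDerivAt_sin y).sub (hasDerivAt_id y)
    have h2 := (hasDerivAt_pow 3 y).div_const 6
    refine (h1.add h2).congr_deriv ?_
    norm_num
  have mono : MonotoneOn (fun t => Real.sin t - t + t ^ 3 / 6) (Set.Ici 0) := by
    apply monotoneOn_of_deriv_nonneg (convex_Ici 0)
    · exact Continuous.continuousOn (by continuity)
    · intro y hy
      exact (key y).differentiableAt.differentiableWithinAt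
    · intro y hy
      rw [(key y).deriv]
      nlinarith [Real.one_sub_sq_div_two_le_cos (x := y)]
  have := mono (Set.self_mem_Ici) hx hx
  simp at this
  linarith

private lemma aux_cos_le (x : ℝ) (hx : 0 ≤ x) : Real.cos x ≤ 1 - x ^ 2 / 2 + x ^ 4 / 24 := by
  have key : ∀ y : ℝ, HasDerivAt (fun t => 1 - t ^ 2 / 2 + t ^ 4 / 24 - Real.cos t)
      (-(2 * y / 2) + 4 * y ^ 3 / 24 - (-Real.sin y)) y := by
    intro y
    have h1 : HasDerivAt (fun t : ℝ => 1 - t ^ 2 / 2) (-(2 * y / 2)) y := by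
      simpa using ((hasDerivAt_pow 2 y).div_const 2).const_sub 1
    have h2 := (hasDerivAt_pow 4 y).div_const 24
    have h3 := Real.hasDerivAt_cos y
    refine ((h1.add h2).sub h3).congr_deriv ?_
    norm_num
  have mono : MonotoneOn (fun t => 1 - t ^ 2 / 2 + t ^ 4 / 24 - Real.cos t) (Set.Ici 0) := by
    apply monotoneOn_of_deriv_nonneg (convex_Ici 0)
    · exact Continuous.continuousOn (by continuity)
    · intro y hy
      exact (key y).differentiableAt.differentiableWithinAt
    · intro y hy
      rw [(key y).deriv, interior_Ici] at *
      have hy0 : 0 ≤ y := le_of_lt (by simpa using hy)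
      nlinarith [aux_sin_ge y hy0]
  have := mono (Set.self_mem_Ici) hx hx
  simp at this
  linarith

theorem sin_mul_tan_sq_bounds (u : ℝ) (hu : 0 ≤ u) (hu2 : u < Real.sqrt 2)
    (huπ : u < Real.pi / 2) :
    u ^ 3 ≤ Real.sin u * Real.tan u ^ 2 ∧
    Real.sin u * Real.tan u ^ 2 ≤ u ^ 3 + u ^ 5 * (4 - u ^ 2) / (2 - u ^ 2) ^ 2 := by
  have hu2' : u ^ 2 < 2 := by
    nlinarith [Real.sq_sqrt (show (0:ℝ) ≤ 2 by norm_num), Real.sqrt_nonneg 2]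
  have hc : 0 < Real.cos u := Real.cos_pos_of_mem_Ioo
    ⟨by nlinarith [Real.pi_pos], huπ⟩
  have hsle : Real.sin u ≤ u := Real.sin_le hu
  have hsge : u - u ^ 3 / 6 ≤ Real.sin u := aux_sin_ge u hu
  have hcle : Real.cos u ≤ 1 - u ^ 2 / 2 + u ^ 4 / 24 := aux_cos_le u hu
  have hcge : 1 - u ^ 2 / 2 ≤ Real.cos u := Real.one_sub_sq_div_two_le_cos
  have hsnn : 0 ≤ Real.sin u := by nlinarith
  have hrw : Real.sin u * Real.tan u ^ 2 = Real.sin u ^ 3 / Real.cos u ^ 2 := by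
    rw [Real.tan_eq_sin_div_cos]
    field_simp
  rw [hrw]
  have hc2 : 0 < Real.cos u ^ 2 := by positivity
  constructor
  · rw [le_div_iff₀ hc2]
    have h1 : u ^ 3 * Real.cos u ^ 2 ≤ u ^ 3 * (1 - u ^ 2 / 2 + u ^ 4 / 24) ^ 2 := by
      have hcc : Real.cos u ^ 2 ≤ (1 - u ^ 2 / 2 + u ^ 4 / 24) ^ 2 :=
        pow_le_pow_left₀ hc.le hcle 2
      exact mul_le_mul_of_nonneg_left hcc (by positivity)
    have h2 : u ^ 3 * (1 - u ^ 2 / 2 + u ^ 4 / 24) ^ 2 ≤ (u - u ^ 3 / 6) ^ 3 := by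
      nlinarith [sq_nonneg u, sq_nonneg (u^2), mul_nonneg hu hu,
        mul_nonneg (mul_nonneg hu hu) hu, sq_nonneg (u^3), sq_nonneg (u^4),
        mul_nonneg (mul_nonneg (mul_nonneg hu hu) hu) (mul_nonneg hu hu)]
    have h3 : (u - u ^ 3 / 6) ^ 3 ≤ Real.sin u ^ 3 := by
      have h0 : 0 ≤ u - u ^ 3 / 6 := by nlinarith
      exact pow_le_pow_left₀ h0 hsge 3
    linarith
  · have h2u : 0 < 2 - u ^ 2 := by linarith
    have heq : u ^ 3 + u ^ 5 * (4 - u ^ 2) / (2 - u ^ 2) ^ 2 = 4 * u ^ 3 / (2 - u ^ 2) ^ 2 := by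
      field_simp
      ring
    rw [heq, div_le_div_iff₀ hc2 (by positivity)]
    have hs3 : Real.sin u ^ 3 ≤ u ^ 3 := pow_le_pow_left₀ hsnn hsle 3
    nlinarith [pow_le_pow_left₀ (by linarith : (0:ℝ) ≤ (2 - u^2)/2) (by linarith : (2 - u^2)/2 ≤ Real.cos u) 2,
      mul_nonneg (mul_nonneg hu hu) hu, sq_nonneg (2 - u^2), pow_pos hc 2]
end

section
/- Let P(θ) = ∑_{j=1}^{N} (aⱼ cos(jθ) + bⱼ sin(jθ)) be a real trigonometric polynomial of degree N with |P(θ)| ≤ 1 for all real θ. Then |P'(θ)| ≤ N for all real θ. -/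
open Real BigOperators Finset

noncomputable def bx (N k : ℕ) : ℝ := (2*k+1) * Real.pi / (2*N)

noncomputable def bz (N k : ℕ) : ℂ := Complex.exp (↑(bx N k) * Complex.I)

lemma bz_pow (N k s : ℕ) : bz N k ^ s = Complex.exp (↑(s * bx N k) * Complex.I) := by
  rw [bz, ← Complex.exp_nat_mul]
  push_cast
  ring_nf

lemma bz_pow_eq (N k s : ℕ) (hN : 1 ≤ N) :
    bz N k ^ s = Complex.exp (↑(s * Real.pi / (2*N)) * Complex.I) *
      (Complex.exp (↑(s * Real.pi / N) * Complex.I)) ^ k := by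
  rw [bz_pow, ← Complex.exp_nat_mul, ← Complex.exp_add, bx]
  have hN' : (N:ℝ) ≠ 0 := by positivity
  have hN'' : (N:ℂ) ≠ 0 := by exact_mod_cast hN'
  push_cast
  congr 1
  field_simp
  ring

lemma G_zero (N t : ℕ) (hN : 1 ≤ N) (h : ¬ (2*N ∣ t)) :
    ∑ k ∈ Finset.range (2*N), bz N k ^ t = 0 := by
  have hNR : (N:ℝ) ≠ 0 := by positivity
  set r : ℂ := Complex.exp (↑(t * Real.pi / N) * Complex.I) with hr
  have hterm : ∀ k, bz N k ^ t
      = Complex.exp (↑(t * Real.pi / (2*N)) * Complex.I) * r ^ k :=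
    fun k => bz_pow_eq N k t hN
  rw [Finset.sum_congr rfl (fun k _ => hterm k), ← Finset.mul_sum]
  have hr2N : r ^ (2*N) = 1 := by
    rw [hr, ← Complex.exp_nat_mul]
    have : ((2*N : ℕ) : ℂ) * (↑(t * Real.pi / N) * Complex.I) = (t : ℂ) * (2 * Real.pi * Complex.I) := by
      push_cast
      have hNC : (N:ℂ) ≠ 0 := by exact_mod_cast hNR
      field_simp
    rw [this]
    exact_mod_cast Complex.exp_nat_mul_two_pi_mul_I t
  have hrne : r ≠ 1 := by
    intro hre
    rw [hr, Complex.exp_eq_one_iff] at hre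
    obtain ⟨n, hn⟩ := hre
    have hI : (Complex.I : ℂ) ≠ 0 := Complex.I_ne_zero
    have h2 : ((t * Real.pi / N : ℝ) : ℂ) = (n : ℂ) * (2 * Real.pi) := by
      apply mul_right_cancel₀ hI
      rw [hn]; ring
    have h3 : (t * Real.pi / N : ℝ) = (n : ℝ) * (2 * Real.pi) := by
      exact_mod_cast h2
    have hpi : Real.pi ≠ 0 := Real.pi_ne_zero
    have h4 : (t : ℝ) = (n : ℝ) * (2 * N) := by
      field_simp at h3
      linear_combination h3
    have h5 : (t : ℤ) = n * (2 * N) := by exact_mod_cast h4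
    exact h (by
      have : (2*N : ℤ) ∣ (t : ℤ) := ⟨n, by linarith [h5]⟩
      exact_mod_cast this)
  have := geom_sum_mul r (2*N)
  rw [hr2N] at this
  simp only [sub_self] at this
  have hsum : ∑ k ∈ Finset.range (2*N), r ^ k = 0 := by
    have hrne' : r - 1 ≠ 0 := sub_ne_zero.mpr hrne
    exact (mul_eq_zero.mp this).resolve_right hrne'
  rw [hsum, mul_zero]

lemma G_mult (N u t : ℕ) (hN : 1 ≤ N) (h : t = 2*N*u) :
    ∑ k ∈ Finset.range (2*N), bz N k ^ t = (2*N : ℂ) * (-1)^u := by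
  have hNR : (N:ℝ) ≠ 0 := by positivity
  have hterm : ∀ k, bz N k ^ t = (-1 : ℂ)^u := by
    intro k
    rw [bz_pow]
    have harg : ((t * bx N k : ℝ) : ℂ) * Complex.I = ((2*k+1)*u : ℕ) * (Real.pi * Complex.I) := by
      rw [bx, h]
      push_cast
      have hNC : (N:ℂ) ≠ 0 := by exact_mod_cast hNR
      field_simp
    rw [harg, Complex.exp_nat_mul, Complex.exp_pi_mul_I]
    rw [pow_mul]
    congr 1
    exact Odd.neg_one_pow ⟨k, by ring⟩
  rw [Finset.sum_congr rfl (fun k _ => hterm k), Finset.sum_const, Finset.card_range]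
  rw [nsmul_eq_mul]
  push_cast
  ring

lemma Hsum_low (N t : ℕ) (hN : 1 ≤ N) (h1 : 1 ≤ t) (h2 : t ≤ 2*N) :
    ∑ l ∈ Finset.range (2*N), ∑ k ∈ Finset.range (2*N), bz N k ^ (t + l)
      = -(2*(N:ℂ)) := by
  rw [Finset.sum_eq_single_of_mem (2*N - t) (Finset.mem_range.mpr (by omega))]
  · rw [G_mult N 1 (t + (2*N - t)) hN (by omega)]
    norm_num
  · intro l hl hne
    apply G_zero N _ hN
    rintro ⟨u, hu⟩
    rw [Finset.mem_range] at hl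
    have hu1 : 1 ≤ u := by nlinarith
    have hu2 : u < 2 := by nlinarith
    have : u = 1 := by omega
    subst this
    simp at hu
    omega

lemma Hsum_high (N t : ℕ) (hN : 1 ≤ N) (h1 : 2*N+1 ≤ t) (h2 : t ≤ 4*N) :
    ∑ l ∈ Finset.range (2*N), ∑ k ∈ Finset.range (2*N), bz N k ^ (t + l)
      = 2*(N:ℂ) := by
  rw [Finset.sum_eq_single_of_mem (4*N - t) (Finset.mem_range.mpr (by omega))]
  · rw [G_mult N 2 (t + (4*N - t)) hN (by omega)]
    norm_num
  · intro l hl hne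
    apply G_zero N _ hN
    rintro ⟨u, hu⟩
    rw [Finset.mem_range] at hl
    have hu1 : 2 ≤ u := by nlinarith
    have hu2 : u < 3 := by nlinarith
    have : u = 2 := by omega
    subst this
    omega

lemma bz_pow_twoN (N k : ℕ) (hN : 1 ≤ N) : bz N k ^ (2*N) = -1 := by
  rw [bz_pow]
  have hNR : (N:ℝ) ≠ 0 := by positivity
  have harg : ((((2*N : ℕ) : ℝ) * bx N k : ℝ) : ℂ) * Complex.I
      = ((2*k+1 : ℕ)) * (Real.pi * Complex.I) := by
    rw [bx]
    push_cast
    have hNC : (N:ℂ) ≠ 0 := by exact_mod_cast hNR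
    field_simp
  rw [harg, Complex.exp_nat_mul, Complex.exp_pi_mul_I]
  exact Odd.neg_one_pow ⟨k, by ring⟩

lemma Tsum (N s : ℕ) (hN : 1 ≤ N) (h1 : 1 ≤ s) (h2 : s ≤ 2*N+1) :
    ∑ k ∈ Finset.range (2*N), bz N k ^ s / (1 - bz N k)^2
      = (N:ℂ)*(s:ℂ) - (N:ℂ)*(N:ℂ) - (N:ℂ) := by
  have key : ∀ k, bz N k ^ s / (1 - bz N k)^2
      = (∑ m ∈ Finset.range (2*N), ∑ l ∈ Finset.range (2*N), bz N k ^ (s+m+l)) / 4 := by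
    intro k
    set ζ := bz N k with hζ
    set S := ∑ m ∈ Finset.range (2*N), ζ ^ m with hS
    have hgs : S * (ζ - 1) = ζ ^ (2*N) - 1 := geom_sum_mul ζ (2*N)
    rw [bz_pow_twoN N k hN] at hgs
    have hS2 : (1 - ζ) * S = 2 := by linear_combination -hgs
    have hne : (1 - ζ) ≠ 0 := by
      intro h0
      rw [h0, zero_mul] at hS2
      norm_num at hS2
    have hexp : ∑ m ∈ Finset.range (2*N), ∑ l ∈ Finset.range (2*N), ζ ^ (s+m+l)
        = ζ ^ s * (S * S) := by
      rw [hS, Finset.sum_mul_sum, Finset.mul_sum]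
      refine Finset.sum_congr rfl fun m _ => ?_
      rw [Finset.mul_sum]
      refine Finset.sum_congr rfl fun l _ => ?_
      rw [pow_add, pow_add]
      ring
    rw [hexp, div_eq_div_iff (pow_ne_zero 2 hne) (by norm_num : (4:ℂ) ≠ 0)]
    linear_combination (-(ζ^s * ((1-ζ)*S + 2))) * hS2
  rw [Finset.sum_congr rfl (fun k _ => key k), ← Finset.sum_div]
  rw [Finset.sum_comm]
  have hswap : ∀ m, ∑ k ∈ Finset.range (2*N), ∑ l ∈ Finset.range (2*N), bz N k ^ (s+m+l)
      = ∑ l ∈ Finset.range (2*N), ∑ k ∈ Finset.range (2*N), bz N k ^ (s+m+l) :=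
    fun m => Finset.sum_comm
  rw [Finset.sum_congr rfl (fun m _ => hswap m)]
  set p := 2*N+1-s with hp
  have hval : ∀ m ∈ Finset.range (2*N),
      (∑ l ∈ Finset.range (2*N), ∑ k ∈ Finset.range (2*N), bz N k ^ (s+m+l))
      = if s+m ≤ 2*N then -(2*(N:ℂ)) else 2*(N:ℂ) := by
    intro m hm
    rw [Finset.mem_range] at hm
    by_cases hc : s+m ≤ 2*N
    · rw [if_pos hc]
      have := Hsum_low N (s+m) hN (by omega) hc
      rw [Finset.sum_congr rfl (fun l _ => Finset.sum_congr rfl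
        (fun k _ => by rw [Nat.add_assoc]))] at this ⊢
      exact this
    · rw [if_neg hc]
      have := Hsum_high N (s+m) hN (by omega) (by omega)
      rw [Finset.sum_congr rfl (fun l _ => Finset.sum_congr rfl
        (fun k _ => by rw [Nat.add_assoc]))] at this ⊢
      exact this
  rw [Finset.sum_congr rfl hval, Finset.sum_ite, Finset.sum_const, Finset.sum_const]
  have hset1 : Finset.filter (fun m => s+m ≤ 2*N) (Finset.range (2*N)) = Finset.range p := by
    apply Finset.ext
    intro m
    simp only [Finset.mem_filter, Finset.mem_range]
    omega
  have hset2 : Finset.filter (fun m => ¬ (s+m ≤ 2*N)) (Finset.range (2*N)) = Finset.Ico p (2*N) := by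
    apply Finset.ext
    intro m
    simp only [Finset.mem_filter, Finset.mem_range, Finset.mem_Ico]
    omega
  rw [hset1, hset2, Finset.card_range, Nat.card_Ico, nsmul_eq_mul, nsmul_eq_mul]
  have hpc : (p : ℂ) = 2*(N:ℂ)+1-(s:ℂ) := by
    rw [hp]
    push_cast [Nat.cast_sub (by omega : s ≤ 2*N+1)]
    ring
  have hpc2 : ((2*N - p : ℕ) : ℂ) = (s:ℂ) - 1 := by
    push_cast [Nat.cast_sub (by omega : p ≤ 2*N), hpc]
    ring
  rw [hpc, hpc2]
  ring

lemma one_sub_bz_sq (N k : ℕ) :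
    (1 - bz N k)^2 = -4 * ((Real.sin (bx N k / 2) : ℝ) : ℂ)^2 * bz N k := by
  set y : ℝ := bx N k / 2 with hy
  have hbz : bz N k = Complex.exp (↑y * Complex.I) * Complex.exp (↑y * Complex.I) := by
    rw [bz, ← Complex.exp_add]
    congr 1
    have : (bx N k : ℝ) = y + y := by rw [hy]; ring
    rw [this]
    push_cast
    ring
  have hsin : ((Real.sin y : ℝ) : ℂ)
      = (Complex.exp (-(↑y) * Complex.I) - Complex.exp (↑y * Complex.I)) * Complex.I / 2 := by
    rw [Complex.ofReal_sin]
    simp only [Complex.sin]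
  have hEE : Complex.exp (-(↑y:ℂ) * Complex.I) * Complex.exp ((↑y:ℂ) * Complex.I) = 1 := by
    rw [← Complex.exp_add]
    simp
  rw [hbz, hsin]
  set E := Complex.exp ((↑y:ℂ) * Complex.I)
  set E' := Complex.exp (-(↑y:ℂ) * Complex.I)
  linear_combination ((E' - E)^2 * E^2) * Complex.I_sq + (2*E^2 - E'*E - 1) * hEE

lemma sinq_pos (N k : ℕ) (hN : 1 ≤ N) (hk : k < 2*N) : 0 < Real.sin (bx N k / 2) := by
  apply Real.sin_pos_of_pos_of_lt_pi
  · rw [bx]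
    positivity
  · rw [bx]
    rw [div_div, div_lt_iff₀ (by positivity)]
    have h' : (k:ℝ) + 1 ≤ 2*(N:ℝ) := by exact_mod_cast hk
    nlinarith [Real.pi_pos]

lemma bz_pow_N (N k : ℕ) (hN : 1 ≤ N) : bz N k ^ N = (-1:ℂ)^k * Complex.I := by
  rw [bz_pow]
  have hNR : (N:ℝ) ≠ 0 := by positivity
  have harg : (((N:ℕ) * bx N k : ℝ) : ℂ) * Complex.I
      = (k:ℂ) * (Real.pi * Complex.I) + (↑(Real.pi/2 : ℝ)) * Complex.I := by
    rw [bx]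
    push_cast
    have hNC : (N:ℂ) ≠ 0 := by exact_mod_cast hNR
    field_simp
  rw [harg, Complex.exp_add]
  have h1 : Complex.exp ((k:ℂ) * (Real.pi * Complex.I)) = (-1:ℂ)^k := by
    rw [Complex.exp_nat_mul, Complex.exp_pi_mul_I]
  have h2 : Complex.exp ((↑(Real.pi/2 : ℝ)) * Complex.I) = Complex.I := by
    rw [Complex.exp_mul_I, ← Complex.ofReal_cos, ← Complex.ofReal_sin]
    simp [Real.cos_pi_div_two, Real.sin_pi_div_two]
  rw [h1, h2]

lemma bz_pow_j (N k j : ℕ) : bz N k ^ j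
    = ↑(Real.cos ((j:ℝ) * bx N k)) + ↑(Real.sin ((j:ℝ) * bx N k)) * Complex.I := by
  rw [bz_pow, Complex.exp_mul_I, ← Complex.ofReal_cos, ← Complex.ofReal_sin]

lemma main_ids (N j : ℕ) (hN : 1 ≤ N) (hj : j ≤ N) :
    (∑ k ∈ Finset.range (2*N),
        (-1:ℝ)^k * Real.sin ((j:ℝ) * bx N k) / (Real.sin (bx N k / 2))^2 = 4*N*j)
    ∧ (∑ k ∈ Finset.range (2*N),
        (-1:ℝ)^k * Real.cos ((j:ℝ) * bx N k) / (Real.sin (bx N k / 2))^2 = 0) := by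
  have hT := Tsum N (N+1+j) hN (by omega) (by omega)
  have hterm : ∀ k ∈ Finset.range (2*N), bz N k ^ (N+1+j) / (1 - bz N k)^2
      = (↑((-1:ℝ)^k * Real.sin ((j:ℝ) * bx N k) / (Real.sin (bx N k / 2))^2)
        - Complex.I * ↑((-1:ℝ)^k * Real.cos ((j:ℝ) * bx N k) / (Real.sin (bx N k / 2))^2)) / 4 := by
    intro k hk
    rw [Finset.mem_range] at hk
    have hsplit : bz N k ^ (N+1+j) = bz N k ^ N * bz N k ^ j * bz N k := by
      rw [show N+1+j = N + j + 1 from by omega, pow_succ, pow_add]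
    rw [one_sub_bz_sq, hsplit, bz_pow_N N k hN, bz_pow_j N k j]
    set qr := Real.sin (bx N k / 2) with hqr
    set sr := Real.sin ((j:ℝ) * bx N k) with hsr
    set cr := Real.cos ((j:ℝ) * bx N k) with hcr
    have hq : qr ≠ 0 := ne_of_gt (sinq_pos N k hN hk)
    have hqC : (qr:ℂ) ≠ 0 := by exact_mod_cast hq
    have hbzne : bz N k ≠ 0 := Complex.exp_ne_zero _
    push_cast
    field_simp
    linear_combination (-(sr:ℂ)) * Complex.I_sq
  rw [Finset.sum_congr rfl hterm, ← Finset.sum_div] at hT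
  rw [Finset.sum_sub_distrib, ← Finset.mul_sum] at hT
  rw [← Complex.ofReal_sum, ← Complex.ofReal_sum] at hT
  set S := ∑ k ∈ Finset.range (2*N),
      (-1:ℝ)^k * Real.sin ((j:ℝ) * bx N k) / (Real.sin (bx N k / 2))^2 with hSdef
  set C := ∑ k ∈ Finset.range (2*N),
      (-1:ℝ)^k * Real.cos ((j:ℝ) * bx N k) / (Real.sin (bx N k / 2))^2 with hCdef
  have hT' : (S:ℂ) - Complex.I * (C:ℂ) = ((4*N*j : ℝ) : ℂ) := by
    rw [div_eq_iff (by norm_num : (4:ℂ) ≠ 0)] at hT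
    rw [hT]
    push_cast
    ring
  have h1 : S = 4*N*j := by
    have := congrArg Complex.re hT'
    simpa using this
  have h2 : C = 0 := by
    have := congrArg Complex.im hT'
    simp at this
    linarith
  exact ⟨h1, h2⟩

lemma abs_id (N : ℕ) (hN : 1 ≤ N) :
    ∑ k ∈ Finset.range (2*N), 1 / (Real.sin (bx N k / 2))^2 = 4*(N:ℝ)^2 := by
  have hT := Tsum N 1 hN le_rfl (by omega)
  have hterm : ∀ k ∈ Finset.range (2*N), bz N k ^ 1 / (1 - bz N k)^2
      = -(1/4) * (1 / (((Real.sin (bx N k / 2) : ℝ)):ℂ)^2) := by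
    intro k hk
    rw [Finset.mem_range] at hk
    have hq : Real.sin (bx N k / 2) ≠ 0 := ne_of_gt (sinq_pos N k hN hk)
    have hqC : ((Real.sin (bx N k / 2) : ℝ):ℂ) ≠ 0 := by exact_mod_cast hq
    have hbzne : bz N k ≠ 0 := Complex.exp_ne_zero _
    have hden : (-4:ℂ) * (((Real.sin (bx N k / 2) : ℝ)):ℂ)^2 * bz N k ≠ 0 :=
      mul_ne_zero (mul_ne_zero (by norm_num) (pow_ne_zero 2 hqC)) hbzne
    rw [pow_one, one_sub_bz_sq, div_eq_iff hden]
    have hq2 : (1:ℂ)/(((Real.sin (bx N k / 2) : ℝ)):ℂ)^2 * (((Real.sin (bx N k / 2) : ℝ)):ℂ)^2 = 1 :=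
      one_div_mul_cancel (pow_ne_zero 2 hqC)
    linear_combination (-(bz N k)) * hq2
  rw [Finset.sum_congr rfl hterm, ← Finset.mul_sum] at hT
  have hs : ∑ k ∈ Finset.range (2*N), 1 / (((Real.sin (bx N k / 2) : ℝ)):ℂ)^2
      = ((∑ k ∈ Finset.range (2*N), 1 / (Real.sin (bx N k / 2))^2 : ℝ) : ℂ) := by
    rw [Complex.ofReal_sum]
    exact Finset.sum_congr rfl fun k _ => by
      simp only [Complex.ofReal_div, Complex.ofReal_one, Complex.ofReal_pow]
  rw [hs] at hT
  have hc : ((∑ k ∈ Finset.range (2*N), 1 / (Real.sin (bx N k / 2))^2 : ℝ) : ℂ)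
      = ((4*(N:ℝ)^2 : ℝ) : ℂ) := by
    simp only [Complex.ofReal_mul, Complex.ofReal_pow, Complex.ofReal_ofNat,
      Complex.ofReal_natCast]
    linear_combination (-4) * hT
  exact_mod_cast hc

/-- Bernstein's inequality for trigonometric polynomials (first derivative). -/
theorem bernstein_inequality (N : ℕ) (a b : ℕ → ℝ) (P : ℝ → ℝ)
    (hP : ∀ θ : ℝ, P θ = ∑ j ∈ Finset.Icc 1 N,
      (a j * Real.cos ((j : ℝ) * θ) + b j * Real.sin ((j : ℝ) * θ)))
    (hbd : ∀ θ : ℝ, |P θ| ≤ 1) :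
    ∀ θ : ℝ, |deriv P θ| ≤ (N : ℝ) := by
  intro θ
  rcases Nat.eq_zero_or_pos N with hN0 | hN
  · have hP0 : P = fun _ => (0:ℝ) := funext fun t => by rw [hP t, hN0]; simp
    rw [hP0]
    simp
  · have hD : ∀ t : ℝ, HasDerivAt P (∑ j ∈ Finset.Icc 1 N,
        ((j:ℝ) * (b j * Real.cos ((j:ℝ)*t) - a j * Real.sin ((j:ℝ)*t)))) t := by
      intro t
      have hPfun : P = fun t => ∑ j ∈ Finset.Icc 1 N,
          (a j * Real.cos ((j:ℝ)*t) + b j * Real.sin ((j:ℝ)*t)) := funext hP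
      rw [hPfun]
      have hjj : ∀ j ∈ Finset.Icc 1 N,
          HasDerivAt (fun t => a j * Real.cos ((j:ℝ)*t) + b j * Real.sin ((j:ℝ)*t))
          ((j:ℝ) * (b j * Real.cos ((j:ℝ)*t) - a j * Real.sin ((j:ℝ)*t))) t := by
        intro j _
        have hjt : HasDerivAt (fun t : ℝ => (j:ℝ)*t) (j:ℝ) t := by
          simpa using (hasDerivAt_id t).const_mul (j:ℝ)
        have hcos := hjt.cos
        have hsin := hjt.sin
        have hsum := (hcos.const_mul (a j)).fun_add (hsin.const_mul (b j))
        exact hsum.congr_deriv (by ring)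
      exact HasDerivAt.fun_sum hjj
    rw [(hD θ).deriv]
    set D := ∑ j ∈ Finset.Icc 1 N,
      ((j:ℝ) * (b j * Real.cos ((j:ℝ)*θ) - a j * Real.sin ((j:ℝ)*θ))) with hDdef
    have hinterp : ∑ k ∈ Finset.range (2*N),
        (-1:ℝ)^k * P (θ + bx N k) / (Real.sin (bx N k / 2))^2 = 4*N*D := by
      have hPk : ∀ k ∈ Finset.range (2*N),
          (-1:ℝ)^k * P (θ + bx N k) / (Real.sin (bx N k / 2))^2
          = ∑ j ∈ Finset.Icc 1 N,
            ((a j * Real.cos ((j:ℝ)*θ) + b j * Real.sin ((j:ℝ)*θ))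
              * ((-1:ℝ)^k * Real.cos ((j:ℝ) * bx N k) / (Real.sin (bx N k / 2))^2)
            + (b j * Real.cos ((j:ℝ)*θ) - a j * Real.sin ((j:ℝ)*θ))
              * ((-1:ℝ)^k * Real.sin ((j:ℝ) * bx N k) / (Real.sin (bx N k / 2))^2)) := by
        intro k _
        rw [hP (θ + bx N k), Finset.mul_sum, Finset.sum_div]
        refine Finset.sum_congr rfl fun j _ => ?_
        have hsplit : (j:ℝ)*(θ + bx N k) = (j:ℝ)*θ + (j:ℝ)*bx N k := by ring
        rw [hsplit, Real.cos_add, Real.sin_add]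
        ring
      rw [Finset.sum_congr rfl hPk, Finset.sum_comm]
      rw [hDdef, Finset.mul_sum]
      refine Finset.sum_congr rfl fun j hj => ?_
      rw [Finset.mem_Icc] at hj
      obtain ⟨hms, hcs⟩ := main_ids N j hN hj.2
      rw [Finset.sum_add_distrib, ← Finset.mul_sum, ← Finset.mul_sum, hms, hcs]
      ring
    have hbound : |∑ k ∈ Finset.range (2*N),
        (-1:ℝ)^k * P (θ + bx N k) / (Real.sin (bx N k / 2))^2| ≤ 4*(N:ℝ)^2 := by
      calc |∑ k ∈ Finset.range (2*N),
          (-1:ℝ)^k * P (θ + bx N k) / (Real.sin (bx N k / 2))^2|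
          ≤ ∑ k ∈ Finset.range (2*N),
            |(-1:ℝ)^k * P (θ + bx N k) / (Real.sin (bx N k / 2))^2| :=
          Finset.abs_sum_le_sum_abs _ _
        _ ≤ ∑ k ∈ Finset.range (2*N), 1 / (Real.sin (bx N k / 2))^2 := by
          refine Finset.sum_le_sum fun k hk => ?_
          rw [Finset.mem_range] at hk
          have hqpos : 0 < (Real.sin (bx N k / 2))^2 :=
            pow_pos (sinq_pos N k hN hk) 2
          rw [abs_div, abs_mul, abs_pow, abs_neg, abs_one, one_pow, one_mul,
            abs_pow, sq_abs]
          exact (div_le_div_iff_of_pos_right hqpos).mpr (hbd _)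
        _ = 4*(N:ℝ)^2 := abs_id N hN
    rw [hinterp] at hbound
    have hNpos : (0:ℝ) < N := by exact_mod_cast hN
    rw [abs_mul, abs_mul] at hbound
    rw [abs_of_pos (by norm_num : (0:ℝ) < 4), abs_of_pos hNpos] at hbound
    nlinarith [abs_nonneg D]
end

section
/- Let x = ∑_{t_j ∈ T} a_j δ_{t_j} be a complex atomic measure on the circle 𝕋 = [0,1) with finite support T, and let F_n map a measure to its Fourier coefficients (F_n μ)_k = ∫ e^{-i2πkt} μ(dt) for |k| ≤ f_c, n = 2f_c+1. Suppose there exists a trigonometric polynomial q(t) = ∑_{|k| ≤ f_c} c_k e^{i2πkt} with q(t_j) = a_j/|a_j| for all t_j ∈ T and |q(t)| < 1 for all t ∉ T. Then x is the unique minimizer of the total-variation norm ‖x̃‖_TV among all finite complex measures x̃ with F_n x̃ = F_n x, provided |T| ≤ n. -/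
open MeasureTheory Complex BigOperators Finset

section Aux

lemma aux_exp_eq_zpow (k : ℤ) (t : ℝ) :
    Complex.exp (-Complex.I * (2 * Real.pi * (k : ℝ) * t)) =
      Complex.exp (-Complex.I * (2 * Real.pi * t)) ^ k := by
  rw [← Complex.exp_int_mul]
  congr 1
  push_cast
  ring

lemma aux_inj {T : Finset ℝ} (hTsub : ↑T ⊆ Set.Ico (0 : ℝ) 1) :
    Set.InjOn (fun t : ℝ => Complex.exp (-Complex.I * (2 * Real.pi * t))) T := by
  intro s hs u hu hsu
  simp only at hsu
  rw [Complex.exp_eq_exp_iff_exists_int] at hsu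
  obtain ⟨n, hn⟩ := hsu
  have hpi : (Real.pi : ℂ) ≠ 0 := by exact_mod_cast Real.pi_ne_zero
  have h2 : (2 * (Real.pi : ℂ) * Complex.I) * (((s : ℂ) - u) + n) = 0 := by
    linear_combination -hn
  have h3 : ((s : ℂ) - u) + n = 0 := by
    rcases mul_eq_zero.1 h2 with h | h
    · exfalso
      have := Complex.I_ne_zero
      simp [mul_eq_zero, hpi, this] at h
    · exact h
  have h4 : (s - u + n : ℝ) = 0 := by exact_mod_cast (by push_cast at h3 ⊢; exact h3 : ((s - u + n : ℝ) : ℂ) = 0)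
  have hs' := hTsub hs
  have hu' := hTsub hu
  have hn1 : (n : ℝ) < 1 := by cases hs'; cases hu'; linarith
  have hn2 : (-1 : ℝ) < n := by cases hs'; cases hu'; linarith
  have : n = 0 := by
    have h5 : n < 1 := by exact_mod_cast hn1
    have h6 : (-1 : ℤ) < n := by exact_mod_cast hn2
    omega
  subst this
  simp at h4
  linarith

lemma aux_vandermonde {fc : ℕ} {T : Finset ℝ} (hTsub : ↑T ⊆ Set.Ico (0 : ℝ) 1)
    (hTcard : T.card ≤ 2 * fc + 1) (d : ℝ → ℂ)
    (hd : ∀ k ∈ Finset.Icc (-(fc : ℤ)) (fc : ℤ),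
      ∑ t ∈ T, d t * Complex.exp (-Complex.I * (2 * Real.pi * (k : ℝ) * t)) = 0) :
    ∀ t ∈ T, d t = 0 := by
  classical
  set z : ℝ → ℂ := fun t => Complex.exp (-Complex.I * (2 * Real.pi * t)) with hz
  have hzne : ∀ t : ℝ, z t ≠ 0 := fun t => Complex.exp_ne_zero _
  have hinj : Set.InjOn z T := aux_inj hTsub
  have hd' : ∀ k ∈ Finset.Icc (-(fc : ℤ)) (fc : ℤ), ∑ t ∈ T, d t * z t ^ k = 0 := by
    intro k hk
    rw [← hd k hk]
    exact Finset.sum_congr rfl fun t _ => by rw [aux_exp_eq_zpow]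
  -- ∑ d t * z t ^(-fc) * P.eval (z t) = 0 for all P of natDegree ≤ 2fc
  have hP : ∀ P : Polynomial ℂ, P.natDegree ≤ 2 * fc →
      ∑ t ∈ T, d t * z t ^ (-(fc : ℤ)) * P.eval (z t) = 0 := by
    intro P hPdeg
    have : ∀ t : ℝ, d t * z t ^ (-(fc : ℤ)) * P.eval (z t) =
        ∑ i ∈ Finset.range (P.natDegree + 1), P.coeff i * (d t * z t ^ ((i : ℤ) - fc)) := by
      intro t
      rw [Polynomial.eval_eq_sum_range, Finset.mul_sum]
      refine Finset.sum_congr rfl fun i _ => ?_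
      rw [sub_eq_add_neg, add_comm, zpow_add₀ (hzne t)]
      rw [zpow_natCast]
      ring
    simp_rw [this]
    rw [Finset.sum_comm]
    refine Finset.sum_eq_zero fun i hi => ?_
    rw [← Finset.mul_sum, hd' ((i : ℤ) - fc) ?_, mul_zero]
    simp only [Finset.mem_range] at hi
    rw [Finset.mem_Icc]
    omega
  intro t₀ ht₀
  have := hP (Lagrange.basis T z t₀) (by
    rw [Lagrange.natDegree_basis hinj ht₀]; omega)
  rw [Finset.sum_eq_single t₀ (fun t ht hne => by
      rw [Lagrange.eval_basis_of_ne (fun h => hne h.symm) ht, mul_zero]) (fun h => absurd ht₀ h)] at this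
  · rw [Lagrange.eval_basis_self hinj ht₀, mul_one] at this
    rcases mul_eq_zero.1 this with h | h
    · exact h
    · exact absurd h (zpow_ne_zero _ (hzne t₀))


lemma aux_norm_exp_neg (k : ℤ) (t : ℝ) :
    ‖Complex.exp (-Complex.I * (2 * Real.pi * (k : ℝ) * t))‖ = 1 := by
  rw [Complex.norm_exp]
  have : (-Complex.I * (2 * Real.pi * (k : ℝ) * t)).re = 0 := by simp
  rw [this, Real.exp_zero]

lemma aux_norm_exp_pos (k : ℤ) (t : ℝ) :
    ‖Complex.exp (Complex.I * (2 * Real.pi * (k : ℝ) * t))‖ = 1 := by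
  rw [Complex.norm_exp]
  have : (Complex.I * (2 * Real.pi * (k : ℝ) * t)).re = 0 := by simp
  rw [this, Real.exp_zero]

lemma aux_conj_exp (k : ℤ) (t : ℝ) :
    (starRingEnd ℂ) (Complex.exp (Complex.I * (2 * Real.pi * (k : ℝ) * t))) =
      Complex.exp (-Complex.I * (2 * Real.pi * (k : ℝ) * t)) := by
  rw [← Complex.exp_conj]
  congr 1
  simp only [map_mul, Complex.conj_I, Complex.conj_ofReal, map_ofNat]

end Aux

open Classical in
/-- Dual certificate implies exact recovery by total-variation minimization.

The atomic signal `x = ∑_{t ∈ T} a t δ_t` is supported on a finite set `T ⊆ [0,1)` with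
`|T| ≤ n = 2f_c + 1` and nonzero amplitudes.  A competing finite complex measure `x̃` is
encoded by a finite positive measure `μ` supported on `[0,1)` together with a density
`g ∈ L¹(μ)`, so that `x̃(E) = ∫_E g dμ`; its total-variation norm is at most `∫ ‖g‖ dμ`
(with equality for the canonical polar representation).  If a low-pass trigonometric dual
certificate `q` exists, then any such competing measure matching the low-pass Fourier data
of `x` satisfies `∑_{t ∈ T} ‖a t‖ ≤ ∫ ‖g‖ dμ`, and in the case of equality it coincides
with `x` as a measure (`∫_E g dμ = ∑_{t ∈ T ∩ E} a t` for every measurable `E`):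
`x` is the unique total-variation minimizer. -/
theorem dual_certificate_implies_exact_recovery
    (fc : ℕ) (hfc : 0 < fc)
    (T : Finset ℝ) (hTsub : ↑T ⊆ Set.Ico (0 : ℝ) 1) (hTcard : T.card ≤ 2 * fc + 1)
    (a : ℝ → ℂ) (ha : ∀ t ∈ T, a t ≠ 0)
    (c : ℤ → ℂ) (q : ℝ → ℂ)
    (hq : ∀ t : ℝ, q t = ∑ k ∈ Finset.Icc (-(fc : ℤ)) (fc : ℤ),
      c k * Complex.exp (Complex.I * (2 * Real.pi * (k : ℝ) * t)))
    (hq_interp : ∀ t ∈ T, q t = a t / (‖a t‖ : ℂ))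
    (hq_off : ∀ t ∈ Set.Ico (0 : ℝ) 1, t ∉ T → ‖q t‖ < 1)
    (μ : Measure ℝ) [IsFiniteMeasure μ] (hμ : μ (Set.Ico (0 : ℝ) 1)ᶜ = 0)
    (g : ℝ → ℂ) (hg : Integrable g μ)
    (hdata : ∀ k ∈ Finset.Icc (-(fc : ℤ)) (fc : ℤ),
      (∫ t, Complex.exp (-Complex.I * (2 * Real.pi * (k : ℝ) * t)) * g t ∂μ) =
        ∑ t ∈ T, a t * Complex.exp (-Complex.I * (2 * Real.pi * (k : ℝ) * t))) :
    (∑ t ∈ T, ‖a t‖) ≤ ∫ t, ‖g t‖ ∂μ ∧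
      ((∫ t, ‖g t‖ ∂μ) = ∑ t ∈ T, ‖a t‖ →
        ∀ E : Set ℝ, MeasurableSet E →
          (∫ t in E, g t ∂μ) = ∑ t ∈ T.filter (fun x => x ∈ E), a t) := by

  classical
  set K : Finset ℤ := Finset.Icc (-(fc : ℤ)) (fc : ℤ) with hKdef
  set e : ℤ → ℝ → ℂ := fun k t => Complex.exp (-Complex.I * (2 * Real.pi * (k : ℝ) * t)) with hedef
  -- conjugate of q
  have hqconj : ∀ t : ℝ, (starRingEnd ℂ) (q t) = ∑ k ∈ K, (starRingEnd ℂ) (c k) * e k t := by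
    intro t
    rw [hq t, map_sum]
    exact Finset.sum_congr rfl fun k _ => by rw [map_mul, aux_conj_exp]
  -- integrability of e k * g
  have hint_e : ∀ k : ℤ, Integrable (fun t => e k t * g t) μ := by
    intro k
    refine hg.bdd_mul (c := 1) ?_ (Filter.Eventually.of_forall fun t => le_of_eq (aux_norm_exp_neg k t))
    exact ((Complex.continuous_exp.comp (by fun_prop)).aestronglyMeasurable)
  -- q is measurable and bounded
  have hq_cont : Continuous q := by
    have : q = fun t : ℝ => ∑ k ∈ K, c k * Complex.exp (Complex.I * (2 * Real.pi * (k : ℝ) * t)) :=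
      funext hq
    rw [this]
    exact continuous_finset_sum _ fun k _ =>
      continuous_const.mul (Complex.continuous_exp.comp (by fun_prop))
  have hint1 : Integrable (fun t => (starRingEnd ℂ) (q t) * g t) μ := by
    refine hg.bdd_mul (c := ∑ k ∈ K, ‖c k‖) ((Complex.continuous_conj.comp hq_cont).aestronglyMeasurable) ?_
    refine Filter.Eventually.of_forall fun t => ?_
    rw [RCLike.norm_conj, hq t]
    refine (norm_sum_le _ _).trans (Finset.sum_le_sum fun k _ => ?_)
    rw [norm_mul, aux_norm_exp_pos, mul_one]
  -- key identity
  have key : ∫ t, (starRingEnd ℂ) (q t) * g t ∂μ = ∑ t ∈ T, (‖a t‖ : ℂ) := by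
    have step1 : ∫ t, (starRingEnd ℂ) (q t) * g t ∂μ
        = ∑ k ∈ K, (starRingEnd ℂ) (c k) * ∫ t, e k t * g t ∂μ := by
      rw [show (fun t => (starRingEnd ℂ) (q t) * g t)
          = fun t => ∑ k ∈ K, (starRingEnd ℂ) (c k) * (e k t * g t) by
        funext t; rw [hqconj t, Finset.sum_mul]; exact Finset.sum_congr rfl fun k _ => by ring]
      rw [integral_finset_sum _ fun k _ => (hint_e k).const_mul _]
      exact Finset.sum_congr rfl fun k _ => integral_const_mul _ _
    rw [step1]
    have step2 : ∀ k ∈ K, (starRingEnd ℂ) (c k) * ∫ t, e k t * g t ∂μ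
        = ∑ t ∈ T, (starRingEnd ℂ) (c k) * (a t * e k t) := by
      intro k hk
      rw [hdata k hk, Finset.mul_sum]
    rw [Finset.sum_congr rfl step2, Finset.sum_comm]
    refine Finset.sum_congr rfl fun t ht => ?_
    have : ∑ k ∈ K, (starRingEnd ℂ) (c k) * (a t * e k t)
        = a t * (starRingEnd ℂ) (q t) := by
      rw [hqconj t, Finset.mul_sum]
      exact Finset.sum_congr rfl fun k _ => by ring
    rw [this, hq_interp t ht]
    have har : (‖a t‖ : ℝ) ≠ 0 := norm_ne_zero_iff.2 (ha t ht)
    have hns : (Complex.normSq (a t) : ℂ) = ((‖a t‖ : ℂ)) ^ 2 := by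
      rw [Complex.normSq_eq_norm_sq]
      push_cast
      ring
    rw [map_div₀, Complex.conj_ofReal, mul_div_assoc', Complex.mul_conj, hns, sq,
      mul_div_assoc, div_self (by exact_mod_cast har), mul_one]
  -- a.e. membership in [0,1)
  have haeI : ∀ᵐ t ∂μ, t ∈ Set.Ico (0 : ℝ) 1 := by
    rw [ae_iff]
    exact hμ
  have hq_le : ∀ᵐ t ∂μ, ‖q t‖ ≤ 1 := by
    filter_upwards [haeI] with t ht
    by_cases hT : t ∈ T
    · rw [hq_interp t hT, norm_div, Complex.norm_real, Real.norm_eq_abs, abs_norm,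
        div_self (norm_ne_zero_iff.2 (ha t hT))]
    · exact (hq_off t ht hT).le
  -- real part identity
  have hre_int : ∫ t, ((starRingEnd ℂ) (q t) * g t).re ∂μ = ∑ t ∈ T, ‖a t‖ := by
    have h1 := integral_re hint1
    simp only [RCLike.re_to_complex] at h1
    rw [h1, key]
    simp
  have hint_re : Integrable (fun t => ((starRingEnd ℂ) (q t) * g t).re) μ := by
    have := hint1.re
    simpa only [RCLike.re_to_complex] using this
  have hptwise : ∀ t : ℝ, ‖q t‖ ≤ 1 → ((starRingEnd ℂ) (q t) * g t).re ≤ ‖g t‖ := by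
    intro t ht
    calc ((starRingEnd ℂ) (q t) * g t).re ≤ ‖(starRingEnd ℂ) (q t) * g t‖ :=
          Complex.re_le_norm _
      _ = ‖q t‖ * ‖g t‖ := by rw [norm_mul, RCLike.norm_conj]
      _ ≤ 1 * ‖g t‖ := mul_le_mul_of_nonneg_right ht (norm_nonneg _)
      _ = ‖g t‖ := one_mul _
  have ineq : (∑ t ∈ T, ‖a t‖) ≤ ∫ t, ‖g t‖ ∂μ := by
    rw [← hre_int]
    refine integral_mono_ae hint_re hg.norm ?_
    filter_upwards [hq_le] with t ht using hptwise t ht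
  refine ⟨ineq, ?_⟩
  -- equality case
  intro heq E hE
  have hh_nonneg : 0 ≤ᵐ[μ] fun t => ‖g t‖ - ((starRingEnd ℂ) (q t) * g t).re := by
    filter_upwards [hq_le] with t ht
    have := hptwise t ht
    simp only [Pi.zero_apply]
    linarith
  have hh_int : Integrable (fun t => ‖g t‖ - ((starRingEnd ℂ) (q t) * g t).re) μ :=
    hg.norm.sub hint_re
  have hh_zero : ∫ t, (‖g t‖ - ((starRingEnd ℂ) (q t) * g t).re) ∂μ = 0 := by
    rw [integral_sub hg.norm hint_re, hre_int, heq, sub_self]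
  have hh0 : (fun t => ‖g t‖ - ((starRingEnd ℂ) (q t) * g t).re) =ᵐ[μ] 0 :=
    (integral_eq_zero_iff_of_nonneg_ae hh_nonneg hh_int).1 hh_zero
  have hg0 : ∀ᵐ t ∂μ, g t = Set.indicator (↑T) g t := by
    filter_upwards [hh0, haeI] with t ht1 ht2
    by_cases hT : t ∈ T
    · rw [Set.indicator_of_mem (by exact_mod_cast hT)]
    · rw [Set.indicator_of_notMem (by exact_mod_cast hT)]
      by_contra hgt
      have hq1 : ‖q t‖ < 1 := hq_off t ht2 hT
      have hgpos : 0 < ‖g t‖ := norm_pos_iff.2 hgt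
      have h1 : ((starRingEnd ℂ) (q t) * g t).re ≤ ‖q t‖ * ‖g t‖ := by
        calc ((starRingEnd ℂ) (q t) * g t).re ≤ ‖(starRingEnd ℂ) (q t) * g t‖ :=
              Complex.re_le_norm _
          _ = ‖q t‖ * ‖g t‖ := by rw [norm_mul, RCLike.norm_conj]
      have h2 : ‖q t‖ * ‖g t‖ < ‖g t‖ := by nlinarith
      have h3 : ‖g t‖ - ((starRingEnd ℂ) (q t) * g t).re = 0 := ht1
      linarith
  -- atomic amplitudes
  have hTmeas : MeasurableSet (↑T : Set ℝ) := T.finite_toSet.measurableSet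
  set b : ℝ → ℂ := fun t => ∫ x in ({t} : Set ℝ), g x ∂μ with hbdef
  have hsplit : ∀ f : ℝ → ℂ, Integrable f μ → (∀ᵐ t ∂μ, f t = Set.indicator ↑T f t) →
      ∫ t, f t ∂μ = ∑ t ∈ T, ∫ x in ({t} : Set ℝ), f x ∂μ := by
    intro f hf hf0
    rw [integral_congr_ae hf0, integral_indicator hTmeas]
    have hU : (↑T : Set ℝ) = ⋃ t ∈ T, ({t} : Set ℝ) := (Set.biUnion_of_singleton _).symm
    rw [hU, integral_biUnion_finset T (fun t _ => measurableSet_singleton t)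
      (fun s _ u _ hsu => Set.disjoint_singleton.2 hsu) (fun t _ => hf.integrableOn)]
  have hg0' : ∀ k : ℤ, ∀ᵐ t ∂μ, e k t * g t = Set.indicator ↑T (fun x => e k x * g x) t := by
    intro k
    filter_upwards [hg0] with t ht
    by_cases hT : t ∈ (↑T : Set ℝ)
    · rw [Set.indicator_of_mem hT]
    · rw [Set.indicator_of_notMem hT, ht, Set.indicator_of_notMem hT, mul_zero]
  have hbk : ∀ k ∈ K, ∑ t ∈ T, b t * e k t = ∑ t ∈ T, a t * e k t := by
    intro k hk
    have h1 := hdata k hk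
    rw [hsplit (fun t => e k t * g t) (hint_e k) (hg0' k)] at h1
    rw [← h1]
    refine Finset.sum_congr rfl fun t ht => ?_
    have h2 : ∫ x in ({t} : Set ℝ), e k x * g x ∂μ = ∫ x in ({t} : Set ℝ), e k t * g x ∂μ :=
      setIntegral_congr_fun (measurableSet_singleton t)
        (fun x hx => by rw [Set.mem_singleton_iff.1 hx])
    rw [h2, integral_const_mul]
    exact mul_comm _ _
  have hd0 : ∀ k ∈ K, ∑ t ∈ T, (b t - a t) * e k t = 0 := by
    intro k hk
    simp only [sub_mul, Finset.sum_sub_distrib, hbk k hk, sub_self]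
  have hba : ∀ t ∈ T, b t = a t := fun t ht =>
    sub_eq_zero.1 (aux_vandermonde hTsub hTcard (fun t => b t - a t) hd0 t ht)
  have hET : E ∩ ↑T = ⋃ t ∈ T.filter (fun x => x ∈ E), ({t} : Set ℝ) := by
    ext x
    simp only [Set.mem_inter_iff, Set.mem_iUnion, Finset.mem_filter, Set.mem_singleton_iff,
      Finset.mem_coe, exists_prop]
    constructor
    · rintro ⟨hxE, hxT⟩; exact ⟨x, ⟨hxT, hxE⟩, rfl⟩
    · rintro ⟨t, ⟨htT, htE⟩, rfl⟩; exact ⟨htE, htT⟩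
  calc ∫ t in E, g t ∂μ = ∫ t in E, Set.indicator ↑T g t ∂μ :=
        integral_congr_ae (ae_restrict_of_ae hg0)
    _ = ∫ t in E ∩ ↑T, g t ∂μ := setIntegral_indicator hTmeas
    _ = ∑ t ∈ T.filter (fun x => x ∈ E), ∫ x in ({t} : Set ℝ), g x ∂μ := by
        rw [hET, integral_biUnion_finset _ (fun t _ => measurableSet_singleton t)
          (fun s _ u _ hsu => Set.disjoint_singleton.2 hsu) (fun t _ => hg.integrableOn)]
    _ = ∑ t ∈ T.filter (fun x => x ∈ E), a t :=
        Finset.sum_congr rfl fun t ht => hba t (Finset.mem_filter.1 ht).1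
end
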